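/- arXiv:2402.12875 — 3 statements merged into one kernel-verified Lean document; each statement's English description precedes it below -/
import Mathlib

section
/- Rounded addition over a finite set of representable numbers is monotone in the first argument: with 𝔽 ⊆ ℝ a finite set containing 0 and round as the closest-point rounding with ties broken toward smaller absolute value, for all x, x', y ∈ 𝔽, x ≥ x' implies round(x + y, 𝔽) ≥ round(x' + y, 𝔽). Consequently the automaton with state space and alphabet 𝔽 and transition δ₊(x, y) = round(x + y, 𝔽) is ordered. -/
/-- `rnd` rounds every real to the closest element of `F`, breaking ties by
choosing the element with smaller absolute value. -/
def IsRound (F : Set ℝ) (rnd : ℝ → ℝ) : Prop :=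
  ∀ x : ℝ, rnd x ∈ F ∧ (∀ y ∈ F, |x - rnd x| ≤ |x - y|) ∧
    (∀ y ∈ F, |x - y| = |x - rnd x| → |rnd x| ≤ |y|)

/-!
If `a ≤ b` but `v := rnd b < u := rnd a`, then `a` is at least as close to `u` as to `v` and `b`
at least as close to `v` as to `u`. Since `t ↦ |t - u| - |t - v|` is antitone for `v ≤ u`, both
are ties, so `a` and `b` are both the midpoint of `u` and `v`; hence `a = b`, contradicting
`rnd b < rnd a`.
-/

section LinearOrderedField

variable {α : Type*} [Field α] [LinearOrder α] [IsStrictOrderedRing α]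

theorem antitone_abs_sub_sub_abs_sub {u v : α} (hvu : v ≤ u) :
    Antitone fun t => |t - u| - |t - v| := by
  intro s t hst
  dsimp only
  rcases abs_cases (s - u) with ⟨h₁, _⟩ | ⟨h₁, _⟩ <;>
    rcases abs_cases (s - v) with ⟨h₂, _⟩ | ⟨h₂, _⟩ <;>
    rcases abs_cases (t - u) with ⟨h₃, _⟩ | ⟨h₃, _⟩ <;>
    rcases abs_cases (t - v) with ⟨h₄, _⟩ | ⟨h₄, _⟩ <;>
    linarith

theorem eq_midpoint_of_abs_sub_eq_abs_sub {t u v : α} (huv : u ≠ v)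
    (h : |t - u| = |t - v|) : t = (u + v) / 2 := by
  rcases abs_eq_abs.mp h with h | h
  · exact absurd (sub_right_injective h) huv
  · linarith

theorem monotone_of_abs_sub_apply_le {f : α → α} (hf : ∀ x y, |x - f x| ≤ |x - f y|) :
    Monotone f := by
  intro a b hab
  by_contra! hlt
  have hanti := antitone_abs_sub_sub_abs_sub hlt.le hab
  have tie_a : |a - f a| = |a - f b| := by linarith [hf a b, hf b a]
  have tie_b : |b - f a| = |b - f b| := by linarith [hf a b, hf b a]
  have hab' : a = b :=
    (eq_midpoint_of_abs_sub_eq_abs_sub hlt.ne' tie_a).trans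
      (eq_midpoint_of_abs_sub_eq_abs_sub hlt.ne' tie_b).symm
  exact hlt.ne (congrArg f hab'.symm)

end LinearOrderedField

theorem IsRound.monotone {F : Set ℝ} {rnd : ℝ → ℝ} (h : IsRound F rnd) : Monotone rnd :=
  monotone_of_abs_sub_apply_le fun x y => (h x).2.1 _ (h y).1

theorem rounded_addition_monotone_general (F : Set ℝ)
    (rnd : ℝ → ℝ) (hrnd : IsRound F rnd) :
    ∀ x x' y : ℝ, x ∈ F → x' ∈ F → y ∈ F → x' ≤ x → rnd (x' + y) ≤ rnd (x + y) :=
  fun _ _ y _ _ _ hle => hrnd.monotone (add_le_add_left hle y)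

/-- Rounded addition over a finite set `F` of representable numbers
containing 0 is monotone in its first argument; equivalently, the automaton with
state space and alphabet `F` and transition `δ₊(x, y) = round(x + y, F)` is
ordered (each letter `y` acts monotonically w.r.t. the usual order on `F ⊆ ℝ`). -/
theorem rounded_addition_monotone (F : Set ℝ) (hfin : F.Finite) (h0 : (0 : ℝ) ∈ F)
    (rnd : ℝ → ℝ) (hrnd : IsRound F rnd) :
    ∀ x x' y : ℝ, x ∈ F → x' ∈ F → y ∈ F → x' ≤ x → rnd (x' + y) ≤ rnd (x + y) :=
  rounded_addition_monotone_general F rnd hrnd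
end

section
/- For every positive integer k, there exists a language in AC⁰ that is not in SIZE[n^k]; i.e., AC⁰ ⊄ SIZE[n^k]. -/
/-- Boolean circuits with fan-in-2 AND/OR gates and NOT gates over `n` inputs. -/
inductive Circ (n : ℕ) : Type
  | input : Fin n → Circ n
  | not : Circ n → Circ n
  | and : Circ n → Circ n → Circ n
  | or : Circ n → Circ n → Circ n

namespace Circ

def eval {n : ℕ} (x : Fin n → Bool) : Circ n → Bool
  | .input i => x i
  | .not c => !(c.eval x)
  | .and c₁ c₂ => c₁.eval x && c₂.eval x
  | .or c₁ c₂ => c₁.eval x || c₂.eval x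

/-- Number of gates (non-input nodes). -/
def size {n : ℕ} : Circ n → ℕ
  | .input _ => 0
  | .not c => c.size + 1
  | .and c₁ c₂ => c₁.size + c₂.size + 1
  | .or c₁ c₂ => c₁.size + c₂.size + 1

end Circ

/-- Boolean circuits with unbounded fan-in AND/OR gates and NOT gates. -/
inductive ACCirc (n : ℕ) : Type
  | input : Fin n → ACCirc n
  | not : ACCirc n → ACCirc n
  | andn : List (ACCirc n) → ACCirc n
  | orn : List (ACCirc n) → ACCirc n

namespace ACCirc

def eval {n : ℕ} (x : Fin n → Bool) : ACCirc n → Bool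
  | .input i => x i
  | .not c => !(c.eval x)
  | .andn cs => cs.attach.all fun c => c.1.eval x
  | .orn cs => cs.attach.any fun c => c.1.eval x
decreasing_by
  all_goals simp only [ACCirc.not.sizeOf_spec, ACCirc.andn.sizeOf_spec, ACCirc.orn.sizeOf_spec]
  all_goals try omega
  all_goals (have := List.sizeOf_lt_of_mem c.2; omega)

/-- Number of gates (non-input nodes). -/
def size {n : ℕ} : ACCirc n → ℕ
  | .input _ => 0
  | .not c => c.size + 1
  | .andn cs => (cs.attach.map fun c => c.1.size).sum + 1
  | .orn cs => (cs.attach.map fun c => c.1.size).sum + 1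
decreasing_by
  all_goals simp only [ACCirc.not.sizeOf_spec, ACCirc.andn.sizeOf_spec, ACCirc.orn.sizeOf_spec]
  all_goals try omega
  all_goals (have := List.sizeOf_lt_of_mem c.2; omega)

def depth {n : ℕ} : ACCirc n → ℕ
  | .input _ => 0
  | .not c => c.depth + 1
  | .andn cs => (cs.attach.map fun c => c.1.depth).foldr max 0 + 1
  | .orn cs => (cs.attach.map fun c => c.1.depth).foldr max 0 + 1
decreasing_by
  all_goals simp only [ACCirc.not.sizeOf_spec, ACCirc.andn.sizeOf_spec, ACCirc.orn.sizeOf_spec]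
  all_goals try omega
  all_goals (have := List.sizeOf_lt_of_mem c.2; omega)

end ACCirc

/-- A language: for each input length, a Boolean function on `{0,1}ⁿ`. -/
def Lang : Type := (n : ℕ) → (Fin n → Bool) → Bool

/-- `L` is decided by fan-in-2 circuits of size `O(T(n))`. -/
def InSIZE (T : ℕ → ℕ) (L : Lang) : Prop :=
  ∃ C : ℕ, ∀ n : ℕ, ∃ c : Circ n,
    c.size ≤ C * T n + C ∧ ∀ x : Fin n → Bool, c.eval x = L n x

/-- `L` is decided by constant-depth, polynomial-size unbounded fan-in circuits. -/
def InAC0 (L : Lang) : Prop :=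
  ∃ (d C k : ℕ), ∀ n : ℕ, ∃ c : ACCirc n,
    c.depth ≤ d ∧ c.size ≤ C * n ^ k + C ∧ ∀ x : Fin n → Bool, c.eval x = L n x


/-!
A fan-in-2 circuit of size `s` on `n` inputs is determined by its Polish notation, a word of
length at most `2s + 1` over `n + 3` letters, so there are at most `(n + 4) ^ (2s + 1)` of them.
For `n = 2 ^ m` and `t = (k + 3) m` there are `2 ^ 2 ^ t = 2 ^ n ^ (k + 3)` Boolean functions of
the first `t` input bits, far more than circuits of size `n ^ (k + 1) + n ≥ C n ^ k + C`; so one of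
them escapes every such circuit. Conversely a function of `O(log n)` bits has a depth-3 DNF of
polynomial size, so the language made of these hard functions lies in AC⁰.
-/

theorem List.injOn_getElem?_of_length_le {α : Type*} (L : ℕ) :
    Set.InjOn (fun (l : List α) (i : Fin L) => l[(i : ℕ)]?) {l | l.length ≤ L} := by
  intro l₁ (h₁ : l₁.length ≤ L) l₂ (h₂ : l₂.length ≤ L) h
  refine List.ext_getElem? fun i => ?_
  by_cases hi : i < L
  · exact congrFun h ⟨i, hi⟩
  · rw [List.getElem?_eq_none (by omega), List.getElem?_eq_none (by omega)]

namespace Circ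

variable {n : ℕ}

def Computes (c : Circ n) (f : (Fin n → Bool) → Bool) : Prop :=
  ∀ x, c.eval x = f x

def encode : Circ n → List (Fin n ⊕ Fin 3)
  | .input i => [.inl i]
  | .not c => .inr 0 :: c.encode
  | .and c₁ c₂ => .inr 1 :: (c₁.encode ++ c₂.encode)
  | .or c₁ c₂ => .inr 2 :: (c₁.encode ++ c₂.encode)

theorem length_encode_le (c : Circ n) : c.encode.length ≤ 2 * c.size + 1 := by
  induction c <;> simp only [encode, size, List.length_cons, List.length_append,
    List.length_nil] <;> omega

theorem eq_of_encode_append_eq {c₁ c₂ : Circ n} {r₁ r₂ : List (Fin n ⊕ Fin 3)}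
    (h : c₁.encode ++ r₁ = c₂.encode ++ r₂) : c₁ = c₂ ∧ r₁ = r₂ := by
  induction c₁ generalizing c₂ r₁ r₂ with
  | input i => cases c₂ <;> simp_all [encode]
  | not c ih =>
    cases c₂ <;> simp only [encode, List.cons_append, List.cons.injEq, reduceCtorEq,
      Sum.inr.injEq, Fin.reduceEq, false_and, not.injEq] at h ⊢
    exact ih h.2
  | and a b iha ihb =>
    cases c₂ <;> simp only [encode, List.cons_append, List.append_assoc, List.cons.injEq,
      reduceCtorEq, Sum.inr.injEq, Fin.reduceEq, false_and, and.injEq] at h ⊢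
    obtain ⟨rfl, hb⟩ := iha h.2
    simpa using ihb hb
  | or a b iha ihb =>
    cases c₂ <;> simp only [encode, List.cons_append, List.append_assoc, List.cons.injEq,
      reduceCtorEq, Sum.inr.injEq, Fin.reduceEq, false_and, or.injEq] at h ⊢
    obtain ⟨rfl, hb⟩ := iha h.2
    simpa using ihb hb

theorem encode_injective : Function.Injective (encode (n := n)) := fun c₁ c₂ h =>
  (eq_of_encode_append_eq (r₁ := []) (r₂ := []) (by rw [h])).1

theorem injOn_encode_padded (s : ℕ) :
    Set.InjOn (fun (c : Circ n) (i : Fin (2 * s + 1)) => c.encode[(i : ℕ)]?)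
      {c | c.size ≤ s} := fun c₁ (h₁ : c₁.size ≤ s) c₂ (h₂ : c₂.size ≤ s) h =>
  encode_injective <| List.injOn_getElem?_of_length_le _
    ((length_encode_le c₁).trans (by omega)) ((length_encode_le c₂).trans (by omega)) h

theorem finite_setOf_size_le (s : ℕ) : {c : Circ n | c.size ≤ s}.Finite :=
  .of_injOn (Set.mapsTo_univ _ _) (injOn_encode_padded s) Set.finite_univ

theorem ncard_setOf_size_le (s : ℕ) :
    {c : Circ n | c.size ≤ s}.ncard ≤ (n + 4) ^ (2 * s + 1) := by
  have := Set.ncard_le_ncard_of_injOn _ (fun _ _ => Set.mem_univ _)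
    (injOn_encode_padded (n := n) s)
  simpa [Set.ncard_univ, Nat.card_fun] using this

theorem exists_forall_computes_lt_size {t s : ℕ} {e : Fin t → Fin n}
    (he : Function.Injective e) (hcount : (n + 4) ^ (2 * s + 1) < 2 ^ 2 ^ t) :
    ∃ g : (Fin t → Bool) → Bool, ∀ c : Circ n, c.Computes (fun x => g (x ∘ e)) → s < c.size := by
  by_contra! hsmall
  let restrictEval (c : Circ n) (a : Fin t → Bool) : Bool :=
    c.eval (Function.extend e a fun _ => false)
  have hsurj : Set.univ ⊆ restrictEval '' {c | c.size ≤ s} := by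
    intro g _
    obtain ⟨c, hc, hsize⟩ := hsmall g
    refine ⟨c, hsize, funext fun a => ?_⟩
    have hext : (Function.extend e a fun _ => false) ∘ e = a := funext (he.extend_apply a _)
    simp only [restrictEval, hc _, hext]
  have := calc
    2 ^ 2 ^ t = (Set.univ : Set ((Fin t → Bool) → Bool)).ncard := by simp
    _ ≤ (restrictEval '' {c | c.size ≤ s}).ncard :=
      Set.ncard_le_ncard hsurj ((finite_setOf_size_le s).image _)
    _ ≤ {c : Circ n | c.size ≤ s}.ncard := Set.ncard_image_le (finite_setOf_size_le s)
    _ ≤ (n + 4) ^ (2 * s + 1) := ncard_setOf_size_le s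
  omega

end Circ

namespace ACCirc

variable {n t : ℕ}

theorem eval_andn (x : Fin n → Bool) (cs : List (ACCirc n)) :
    (andn cs).eval x = cs.all (·.eval x) := by
  rw [eval]; simp

theorem eval_orn (x : Fin n → Bool) (cs : List (ACCirc n)) :
    (orn cs).eval x = cs.any (·.eval x) := by
  rw [eval]; simp

theorem size_andn_le {cs : List (ACCirc n)} {s : ℕ} (h : ∀ c ∈ cs, c.size ≤ s) :
    (andn cs).size ≤ cs.length * s + 1 := by
  rw [size]
  simpa using List.sum_le_card_nsmul (cs.attach.map (·.1.size)) s (by simpa using h)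

theorem size_orn_le {cs : List (ACCirc n)} {s : ℕ} (h : ∀ c ∈ cs, c.size ≤ s) :
    (orn cs).size ≤ cs.length * s + 1 := by
  rw [size]
  simpa using List.sum_le_card_nsmul (cs.attach.map (·.1.size)) s (by simpa using h)

theorem depth_andn_le {cs : List (ACCirc n)} {d : ℕ} (h : ∀ c ∈ cs, c.depth ≤ d) :
    (andn cs).depth ≤ d + 1 := by
  rw [depth]
  simpa using List.max_le_of_forall_le _ d (by simpa using h)

theorem depth_orn_le {cs : List (ACCirc n)} {d : ℕ} (h : ∀ c ∈ cs, c.depth ≤ d) :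
    (orn cs).depth ≤ d + 1 := by
  rw [depth]
  simpa using List.max_le_of_forall_le _ d (by simpa using h)

def literal (i : Fin n) (b : Bool) : ACCirc n := if b then input i else not (input i)

theorem eval_literal (x : Fin n → Bool) (i : Fin n) (b : Bool) :
    (literal i b).eval x = (x i == b) := by
  cases b <;> simp [literal, eval]

theorem size_literal_le (i : Fin n) (b : Bool) : (literal i b).size ≤ 1 := by
  cases b <;> simp [literal, size]

theorem depth_literal_le (i : Fin n) (b : Bool) : (literal i b).depth ≤ 1 := by
  cases b <;> simp [literal, depth]

def minterm (e : Fin t → Fin n) (a : Fin t → Bool) : ACCirc n :=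
  andn (List.ofFn fun i => literal (e i) (a i))

theorem eval_minterm (x : Fin n → Bool) (e : Fin t → Fin n) (a : Fin t → Bool) :
    (minterm e a).eval x = decide (x ∘ e = a) := by
  rw [Bool.eq_iff_iff]
  simp [minterm, eval_andn, List.all_eq_true, eval_literal, funext_iff]

theorem size_minterm_le (e : Fin t → Fin n) (a : Fin t → Bool) :
    (minterm e a).size ≤ t + 1 := by
  refine (size_andn_le (s := 1) ?_).trans ?_
  · simp [List.mem_ofFn, size_literal_le]
  · simp

theorem depth_minterm_le (e : Fin t → Fin n) (a : Fin t → Bool) : (minterm e a).depth ≤ 2 :=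
  depth_andn_le (by simp [List.mem_ofFn, depth_literal_le])

open Classical in
noncomputable def dnf (e : Fin t → Fin n) (g : (Fin t → Bool) → Bool) : ACCirc n :=
  orn ((Finset.univ.filter (g · = true)).toList.map (minterm e))

theorem eval_dnf (x : Fin n → Bool) (e : Fin t → Fin n) (g : (Fin t → Bool) → Bool) :
    (dnf e g).eval x = g (x ∘ e) := by
  rw [Bool.eq_iff_iff]
  simp [dnf, eval_orn, List.any_eq_true, eval_minterm]

theorem size_dnf_le (e : Fin t → Fin n) (g : (Fin t → Bool) → Bool) :
    (dnf e g).size ≤ 2 ^ t * (t + 1) + 1 := by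
  classical
  refine (size_orn_le (s := t + 1) ?_).trans ?_
  · simp [size_minterm_le]
  · gcongr
    simpa using Finset.card_filter_le Finset.univ (g · = true)

theorem depth_dnf_le (e : Fin t → Fin n) (g : (Fin t → Bool) → Bool) : (dnf e g).depth ≤ 3 :=
  depth_orn_le (by simp [depth_minterm_le])

end ACCirc

theorem inAC0_of_le_mul_log {c : ℕ} {t : ℕ → ℕ} (ht : ∀ n, t n ≤ c * Nat.log 2 n)
    (e : ∀ n, Fin (t n) → Fin n) (g : ∀ n, (Fin (t n) → Bool) → Bool) :
    InAC0 fun n x => g n (x ∘ e n) := by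
  refine ⟨3, 2, 2 * c, fun n => ⟨ACCirc.dnf (e n) (g n), ACCirc.depth_dnf_le _ _, ?_,
    (ACCirc.eval_dnf · _ _)⟩⟩
  have hsize : (ACCirc.dnf (e n) (g n)).size ≤ 2 ^ t n * 2 ^ t n + 1 :=
    (ACCirc.size_dnf_le _ _).trans (by gcongr; exact Nat.lt_two_pow_self)
  rcases Nat.eq_zero_or_pos n with rfl | hn
  · have ht0 : t 0 = 0 := by simpa using ht 0
    simp only [ht0, pow_zero] at hsize
    omega
  · have h2t : 2 ^ t n ≤ n ^ c := calc
      2 ^ t n ≤ 2 ^ (c * Nat.log 2 n) := Nat.pow_le_pow_right two_pos (ht n)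
      _ = (2 ^ Nat.log 2 n) ^ c := by rw [mul_comm, pow_mul]
      _ ≤ n ^ c := Nat.pow_le_pow_left (Nat.pow_log_le_self 2 hn.ne') c
    have hsq : 2 ^ t n * 2 ^ t n ≤ n ^ (2 * c) := by rw [two_mul, pow_add]; gcongr
    omega

theorem pow_lt_two_pow_pow (k : ℕ) {n : ℕ} (hn : 16 ≤ n) :
    (n + 4) ^ (2 * (n ^ (k + 1) + n) + 1) < 2 ^ n ^ (k + 3) := by
  have hP : n ≤ n ^ (k + 1) := Nat.le_self_pow (by omega) n
  have hexp : (n + 4) * (2 * (n ^ (k + 1) + n) + 1) < n ^ (k + 3) := calc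
    _ ≤ (2 * n) * (5 * n ^ (k + 1)) := by gcongr <;> omega
    _ < 16 * (n * n ^ (k + 1)) := by nlinarith
    _ ≤ n * (n * n ^ (k + 1)) := by gcongr
    _ = n ^ (k + 3) := by ring
  calc (n + 4) ^ (2 * (n ^ (k + 1) + n) + 1)
      ≤ (2 ^ (n + 4)) ^ (2 * (n ^ (k + 1) + n) + 1) := by gcongr; exact Nat.lt_two_pow_self.le
    _ = 2 ^ ((n + 4) * (2 * (n ^ (k + 1) + n) + 1)) := by rw [pow_mul]
    _ < 2 ^ n ^ (k + 3) := Nat.pow_lt_pow_right one_lt_two hexp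

theorem exists_le_two_pow_and_mul_le_two_pow (b a : ℕ) : ∃ m, b ≤ 2 ^ m ∧ a * m ≤ 2 ^ m := by
  refine ⟨2 * (a + b), ?_, ?_⟩
  · calc b ≤ 2 * (a + b) := by omega
      _ ≤ 2 ^ (2 * (a + b)) := Nat.lt_two_pow_self.le
  · calc a * (2 * (a + b)) ≤ 2 * (a + b) ^ 2 + 1 := by nlinarith
      _ ≤ 2 ^ (2 * (a + b)) := Nat.two_mul_sq_add_one_le_two_pow_two_mul _

def hardBits (k n : ℕ) : ℕ := min ((k + 3) * Nat.log 2 n) n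

/-- Arbitrary when every function of these bits has a circuit of size `n ^ (k + 1) + n`. -/
noncomputable def hardFn (k n : ℕ) : (Fin (hardBits k n) → Bool) → Bool :=
  Classical.epsilon fun g => ∀ c : Circ n,
    c.Computes (fun x => g (x ∘ Fin.castLE (min_le_right _ _))) → n ^ (k + 1) + n < c.size

noncomputable def hardLang (k : ℕ) : Lang := fun n x =>
  hardFn k n (x ∘ Fin.castLE (min_le_right _ _))

theorem inAC0_hardLang (k : ℕ) : InAC0 (hardLang k) :=
  inAC0_of_le_mul_log (fun _ => min_le_left _ _) _ _

theorem hardBits_two_pow {k m : ℕ} (hm : (k + 3) * m ≤ 2 ^ m) :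
    hardBits k (2 ^ m) = (k + 3) * m := by
  rw [hardBits, Nat.log_pow one_lt_two, min_eq_left hm]

theorem lt_size_of_computes_hardLang {k m : ℕ} (h16 : 16 ≤ 2 ^ m) (hm : (k + 3) * m ≤ 2 ^ m)
    {c : Circ (2 ^ m)} (hc : c.Computes (hardLang k (2 ^ m))) :
    (2 ^ m) ^ (k + 1) + 2 ^ m < c.size := by
  have hcount : (2 ^ m + 4) ^ (2 * ((2 ^ m) ^ (k + 1) + 2 ^ m) + 1)
      < 2 ^ 2 ^ hardBits k (2 ^ m) := by
    rw [hardBits_two_pow hm, mul_comm (k + 3) m, pow_mul]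
    exact pow_lt_two_pow_pow k h16
  exact Classical.epsilon_spec
    (Circ.exists_forall_computes_lt_size (Fin.castLE_injective _) hcount) c hc

theorem AC0_not_subset_SIZE_poly_general (k : ℕ) :
    ∃ L : Lang, InAC0 L ∧ ¬ InSIZE (fun n => n ^ k) L := by
  refine ⟨hardLang k, inAC0_hardLang k, ?_⟩
  rintro ⟨C, hC⟩
  obtain ⟨m, hbig, hm⟩ := exists_le_two_pow_and_mul_le_two_pow (C + 16) (k + 3)
  obtain ⟨c, hsize, hc⟩ := hC (2 ^ m)
  dsimp only at hsize
  have hlower := lt_size_of_computes_hardLang (by omega) hm hc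
  have hupper : C * (2 ^ m) ^ k + C ≤ (2 ^ m) ^ (k + 1) + 2 ^ m := by
    rw [pow_succ']
    gcongr <;> omega
  omega

/-- For every positive integer `k`, there is a language in `AC⁰`
that is not in `SIZE[n^k]`. -/
theorem AC0_not_subset_SIZE_poly (k : ℕ) (hk : 1 ≤ k) :
    ∃ L : Lang, InAC0 L ∧ ¬ InSIZE (fun n => n ^ k) L :=
  AC0_not_subset_SIZE_poly_general k
end

section
/- Orthogonality of the interleaved sign-binary encodings used for hard attention: for s ≥ 1 and indices i, j ∈ [2^s − 1], let q_i be the length-2s vector interleaving sbin_s(i) with the all-ones vector, and k_j = B_s · (interleaving of sbin_s(j) with the all-(−1) vector), where sbin_s(x) ∈ {−1,1}^s is the signed binary encoding of x and B_s = 2^s − 2^{−s}. Then the iteratively rounded inner product ⟨q_i, k_j⟩_s (computed by rounding to 𝔽_{0,s} after each partial sum) equals 0 if i = j and −B_s if i ≠ j; hence round(exp(⟨q_i, k_j⟩_s)) = 1[i = j]. -/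
/-- The fixed-point numbers with `2s`-bit significand and no exponent bits. -/
def Fs (s : ℕ) : Set ℝ :=
  {x | ∃ (c : ℝ) (k : ℕ), (c = 1 ∨ c = -1) ∧ k < 2 ^ (2 * s) ∧
    x = c * k * (2 : ℝ) ^ (-(s : ℤ))}

/-- `B_s = 2^s - 2^{-s}`, the largest element of `F_{0,s}`. -/
noncomputable def Bs (s : ℕ) : ℝ := 2 ^ s - (2 : ℝ) ^ (-(s : ℤ))

/-- Iterated sum with rounding after each binary addition, left to right. -/
def itSum (rnd : ℝ → ℝ) : List ℝ → ℝ
  | [] => 0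
  | a :: rest => rest.foldl (fun acc b => rnd (acc + b)) a

/-- Iteratively rounded inner product: each coordinate product is rounded,
then the products are summed with rounding after each addition. -/
def itInner (rnd : ℝ → ℝ) (x y : List ℝ) : ℝ :=
  itSum rnd ((x.zip y).map fun p => rnd (p.1 * p.2))

/-- The `j`-th coordinate of the signed binary encoding of `i`. -/
def sb (i j : ℕ) : ℝ := if Nat.testBit i j then 1 else -1

/-- `q_i`: the signed binary encoding of `i` interleaved with all-ones. -/
def qvec (s i : ℕ) : List ℝ := (List.range s).flatMap fun j => [sb i j, 1]

/-- `k_j`: `B_s` times the signed binary encoding of `j` interleaved with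
all-(−1)'s. -/
noncomputable def kvec (s j : ℕ) : List ℝ :=
  (List.range s).flatMap fun l => [Bs s * sb j l, -(Bs s)]

/-!
Every partial sum of `⟨q_i, k_j⟩_s` is taken after a pair of coordinates, `±B_s` (the product
of the two sign bits) followed by `-B_s`, and it stays in `{0, -B_s}`: starting from `0`, a
matching bit gives `0 + B_s - B_s = 0`, while a mismatch gives `-2B_s`, which saturates to
`-B_s`; from `-B_s` the pair brings the sum back to `-B_s` either way. So the result is `0`
exactly when all `s` bits of `i` and `j` agree, i.e. when `i = j`. Finally `exp 0 = 1` is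
representable, and `exp (-B_s) < 2^{-s}/2` rounds to `0`.
-/

open Real

lemma two_zpow_neg_natCast (s : ℕ) : (2 : ℝ) ^ (-(s : ℤ)) = ((2 : ℝ) ^ s)⁻¹ := by
  rw [zpow_neg, zpow_natCast]

lemma Bs_eq (s : ℕ) : Bs s = ((2 : ℝ) ^ (2 * s) - 1) * 2 ^ (-(s : ℤ)) := by
  rw [Bs, two_zpow_neg_natCast, two_mul, pow_add]
  field_simp

lemma natCast_add_half_le_Bs {s : ℕ} (hs : 1 ≤ s) : (s : ℝ) + 1 / 2 ≤ Bs s := by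
  have hpow : (s : ℝ) + 1 ≤ 2 ^ s := by exact_mod_cast Nat.lt_two_pow_self
  have hinv : ((2 : ℝ) ^ s)⁻¹ ≤ 2⁻¹ :=
    inv_anti₀ (by norm_num) (by simpa using pow_le_pow_right₀ (by norm_num : (1 : ℝ) ≤ 2) hs)
  rw [Bs, two_zpow_neg_natCast]
  linarith

lemma exp_neg_Bs_lt {s : ℕ} (hs : 1 ≤ s) : exp (-Bs s) < (2 : ℝ) ^ (-(s : ℤ)) / 2 := by
  have hlog : ((s : ℝ) + 1) * log 2 < Bs s := by
    have : (1 : ℝ) ≤ s := by exact_mod_cast hs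
    nlinarith [natCast_add_half_le_Bs hs, log_two_lt_d9, log_pos (by norm_num : (1 : ℝ) < 2)]
  have hexp : exp (((s : ℝ) + 1) * log 2) = 2 ^ (s + 1) := by
    rw [mul_comm, ← rpow_def_of_pos two_pos, ← rpow_natCast]
    push_cast
    rfl
  calc exp (-Bs s) < exp (-(((s : ℝ) + 1) * log 2)) := exp_lt_exp.mpr (by linarith)
    _ = (2 : ℝ) ^ (-(s : ℤ)) / 2 := by
      rw [exp_neg, hexp, two_zpow_neg_natCast, pow_succ, mul_inv, div_eq_mul_inv]

section Fs

variable {s : ℕ}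

lemma zero_mem_Fs : (0 : ℝ) ∈ Fs s :=
  ⟨1, 0, Or.inl rfl, by positivity, by simp⟩

lemma neg_mem_Fs {x : ℝ} (hx : x ∈ Fs s) : -x ∈ Fs s := by
  obtain ⟨c, k, hc, hk, rfl⟩ := hx
  exact ⟨-c, k, by rcases hc with rfl | rfl <;> norm_num, hk, by ring⟩

lemma one_mem_Fs (hs : 1 ≤ s) : (1 : ℝ) ∈ Fs s := by
  refine ⟨1, 2 ^ s, Or.inl rfl, Nat.pow_lt_pow_right (by norm_num) (by omega), ?_⟩
  rw [two_zpow_neg_natCast]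
  push_cast
  field_simp

lemma Bs_mem_Fs : Bs s ∈ Fs s := by
  have h : 1 ≤ 2 ^ (2 * s) := Nat.one_le_two_pow
  refine ⟨1, 2 ^ (2 * s) - 1, Or.inl rfl, by omega, ?_⟩
  rw [Bs_eq, Nat.cast_sub h]
  push_cast
  ring

lemma abs_mem_Fs {x : ℝ} (hx : x ∈ Fs s) :
    ∃ k : ℕ, k < 2 ^ (2 * s) ∧ |x| = k * (2 : ℝ) ^ (-(s : ℤ)) := by
  obtain ⟨c, k, hc, hk, rfl⟩ := hx
  refine ⟨k, hk, ?_⟩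
  rcases hc with rfl | rfl <;> simp [abs_mul]

lemma abs_le_Bs_of_mem_Fs {x : ℝ} (hx : x ∈ Fs s) : |x| ≤ Bs s := by
  obtain ⟨k, hk, habs⟩ := abs_mem_Fs hx
  have hk' : (k : ℝ) ≤ 2 ^ (2 * s) - 1 := by
    have : ((k + 1 : ℕ) : ℝ) ≤ 2 ^ (2 * s) := by exact_mod_cast hk
    push_cast at this
    linarith
  rw [habs, Bs_eq]
  gcongr

lemma two_zpow_neg_le_abs_of_mem_Fs {x : ℝ} (hx : x ∈ Fs s) (hne : x ≠ 0) :
    (2 : ℝ) ^ (-(s : ℤ)) ≤ |x| := by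
  obtain ⟨k, -, habs⟩ := abs_mem_Fs hx
  have hk : (1 : ℝ) ≤ k := by
    rcases Nat.eq_zero_or_pos k with rfl | h
    · simp_all
    · exact_mod_cast h
  rw [habs]
  exact le_mul_of_one_le_left (by positivity) hk

lemma Bs_nonneg : 0 ≤ Bs s :=
  (abs_nonneg 0).trans (abs_le_Bs_of_mem_Fs zero_mem_Fs)

lemma isLeast_Fs : IsLeast (Fs s) (-Bs s) :=
  ⟨neg_mem_Fs Bs_mem_Fs, fun _ hx => neg_le_of_abs_le (abs_le_Bs_of_mem_Fs hx)⟩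

end Fs

namespace IsRound

variable {F : Set ℝ} {rnd : ℝ → ℝ}

lemma eq_self_of_mem (h : IsRound F rnd) {x : ℝ} (hx : x ∈ F) : rnd x = x := by
  have := (h x).2.1 x hx
  rw [sub_self, abs_zero] at this
  linarith [abs_nonpos_iff.mp this]

lemma rnd_rnd (h : IsRound F rnd) (x : ℝ) : rnd (rnd x) = rnd x :=
  h.eq_self_of_mem (h x).1

lemma eq_of_le_of_isLeast (h : IsRound F rnd) {m x : ℝ} (hm : IsLeast F m) (hx : x ≤ m) :
    rnd x = m := by
  obtain ⟨hmem, hmin, -⟩ := h x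
  have hle := hmin m hm.1
  have hge := hm.2 hmem
  rw [abs_of_nonpos (by linarith), abs_of_nonpos (by linarith)] at hle
  linarith

lemma eq_zero_of_abs_lt (h : IsRound F rnd) (h0 : (0 : ℝ) ∈ F) {δ x : ℝ}
    (hδ : ∀ y ∈ F, y ≠ 0 → δ ≤ |y|) (hx : |x| < δ / 2) : rnd x = 0 := by
  obtain ⟨hmem, hmin, -⟩ := h x
  by_contra hne
  have hdist := hmin 0 h0
  rw [sub_zero] at hdist
  have := hδ _ hmem hne
  linarith [abs_sub_abs_le_abs_sub (rnd x) x, abs_sub_comm x (rnd x)]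

/-- The first summand is already rounded, so it equals `rnd (0 + a)`. -/
lemma itInner_eq_foldl (h : IsRound F rnd) (x y : List ℝ) :
    itInner rnd x y =
      (x.zip y).foldl (fun acc p => rnd (acc + rnd (p.1 * p.2))) 0 := by
  rw [itInner, ← List.foldl_map (g := fun acc b => rnd (acc + b))]
  cases x.zip y with
  | nil => rfl
  | cons a rest => simp [itSum, h.rnd_rnd]

end IsRound

lemma zip_flatMap_pair {α β : Type*} (f g : ℕ → α) (f' g' : ℕ → β) (n : ℕ) :
    ((List.range n).flatMap fun l => [f l, g l]).zip
        ((List.range n).flatMap fun l => [f' l, g' l]) =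
      (List.range n).flatMap fun l => [(f l, f' l), (g l, g' l)] := by
  induction n with
  | zero => simp
  | succ n ih =>
    simp only [List.range_succ, List.flatMap_append, List.flatMap_cons, List.flatMap_nil,
      List.append_nil]
    rw [List.zip_append (by simp only [List.length_flatMap]; rfl), ih]
    simp

lemma sb_mul_sb (i j l : ℕ) :
    sb i l * sb j l = if i.testBit l = j.testBit l then 1 else -1 := by
  unfold sb
  cases i.testBit l <;> cases j.testBit l <;> norm_num

lemma eq_iff_forall_testBit_eq_of_lt_two_pow {s i j : ℕ} (hi : i < 2 ^ s) (hj : j < 2 ^ s) :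
    (∀ l < s, i.testBit l = j.testBit l) ↔ i = j := by
  refine ⟨fun h => Nat.eq_of_testBit_eq fun l => ?_, by rintro rfl _ _; rfl⟩
  rcases Nat.lt_or_ge l s with hl | hl
  · exact h l hl
  · have hpow : 2 ^ s ≤ 2 ^ l := Nat.pow_le_pow_right (by norm_num) hl
    rw [Nat.testBit_lt_two_pow (hi.trans_le hpow), Nat.testBit_lt_two_pow (hj.trans_le hpow)]

section PartialSums

variable {s : ℕ} {rnd : ℝ → ℝ}

lemma foldl_sign_pairs (hrnd : IsRound (Fs s) rnd) (p : ℕ → Prop) [DecidablePred p] (n : ℕ) :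
    (List.range n).foldl
        (fun acc l => rnd (rnd (acc + if p l then Bs s else -Bs s) + -Bs s)) 0 =
      if ∀ l < n, p l then 0 else -Bs s := by
  have h0 : rnd 0 = 0 := hrnd.eq_self_of_mem zero_mem_Fs
  have hB : rnd (Bs s) = Bs s := hrnd.eq_self_of_mem Bs_mem_Fs
  have hnB : rnd (-Bs s) = -Bs s := hrnd.eq_self_of_mem isLeast_Fs.1
  have hsat : rnd (-Bs s + -Bs s) = -Bs s :=
    hrnd.eq_of_le_of_isLeast isLeast_Fs (by linarith [Bs_nonneg (s := s)])
  induction n with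
  | zero => simp
  | succ n ih =>
    rw [List.range_succ, List.foldl_append, ih]
    simp only [List.foldl_cons, List.foldl_nil, Nat.forall_lt_succ_right]
    by_cases hall : ∀ l < n, p l
    · by_cases hn : p n <;> simp [if_pos hall, hn, h0, hB, hnB, hsat]
    · by_cases hn : p n <;> simp [hall, hn, h0, hnB, hsat]

theorem itInner_qvec_kvec (hrnd : IsRound (Fs s) rnd) (i j : ℕ) :
    itInner rnd (qvec s i) (kvec s j) =
      if ∀ l < s, i.testBit l = j.testBit l then 0 else -Bs s := by
  rw [hrnd.itInner_eq_foldl, qvec, kvec, zip_flatMap_pair, List.foldl_flatMap,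
    ← foldl_sign_pairs hrnd]
  congr 1
  funext acc l
  simp only [List.foldl_cons, List.foldl_nil, one_mul, mul_left_comm _ (Bs s), sb_mul_sb]
  split_ifs <;> simp [hrnd.eq_self_of_mem Bs_mem_Fs, hrnd.eq_self_of_mem isLeast_Fs.1]

end PartialSums

/-- For `s ≥ 1` and `i, j ∈ [2^s − 1]`, the iteratively rounded
inner product `⟨q_i, k_j⟩_s` equals `0` if `i = j` and `−B_s` if `i ≠ j`; hence
`round(exp(⟨q_i, k_j⟩_s)) = 1[i = j]`. -/
theorem hard_attention_orthogonality (s i j : ℕ) (hs : 1 ≤ s)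
    (hi : 1 ≤ i ∧ i ≤ 2 ^ s - 1) (hj : 1 ≤ j ∧ j ≤ 2 ^ s - 1)
    (rnd : ℝ → ℝ) (hrnd : IsRound (Fs s) rnd) :
    itInner rnd (qvec s i) (kvec s j) = (if i = j then 0 else -(Bs s)) ∧
      rnd (Real.exp (itInner rnd (qvec s i) (kvec s j))) =
        (if i = j then 1 else 0) := by
  have hpos : 1 ≤ 2 ^ s := Nat.one_le_two_pow
  have hinner : itInner rnd (qvec s i) (kvec s j) = if i = j then 0 else -Bs s := by
    rw [itInner_qvec_kvec hrnd]
    exact if_congr (eq_iff_forall_testBit_eq_of_lt_two_pow (by omega) (by omega)) rfl rfl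
  refine ⟨hinner, ?_⟩
  rw [hinner]
  split_ifs
  · rw [exp_zero]
    exact hrnd.eq_self_of_mem (one_mem_Fs hs)
  · refine hrnd.eq_zero_of_abs_lt zero_mem_Fs (fun _ => two_zpow_neg_le_abs_of_mem_Fs) ?_
    rw [abs_of_pos (exp_pos _)]
    exact exp_neg_Bs_lt hs
end
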